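/- Let ⊢⊣, → be relations on a set A such that ⊢⊣ is symmetric and → ∘ ⊢⊣* is well-founded. Let ⇒ = → ∪ ⊢⊣ and let ⇐ be the inverse of ⇒. Then → is Church-Rosser modulo ⊢⊣* if and only if both (i) ← ∘ → ⊆ ⇒* ∘ ⇐*, and (ii) ⊢⊣ ∘ → ⊆ → ∘ ⇒* ∘ ⇐*. -/

import Mathlib

/-!
Necessity: the peak condition is the Church–Rosser property applied to `a ← b → c`. For a cliff
`a ⊢⊣ b → c` it gives a valley `a →* u ⊢⊣* v ←* c`, which must start with an `→`-step, since
otherwise `b → c ⇒* b` is a cycle of the well-founded relation `(⊢⊣* ∘ → ∘ ⊢⊣*)⁺`.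

Sufficiency: compare conversions by the multisets of their vertices under the multiset extension
(`Relation.CutExpand`) of that well-founded relation. A conversion that is not a valley
`→* ⊢⊣* ←*` contains a peak `a ← x → y` or a cliff `a ⊢⊣ x → y` or `a ← x ⊢⊣ y`; replacing it by
the detour provided by (i) or (ii) trades `x` for vertices that all lie below `x`.
-/

namespace ChurchRosserModulo

open Relation Multiset

section Walk

variable {A : Type*} {r s : A → A → Prop}

/-- `M` collects the vertices except the endpoint `b`, which makes it additive under
concatenation. -/
inductive Walk (r : A → A → Prop) : A → A → Multiset A → Prop
  | refl (a : A) : Walk r a a 0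
  | cons {a x b : A} {M : Multiset A} : r a x → Walk r x b M → Walk r a b (a ::ₘ M)

namespace Walk

theorem append {a y b : A} {K R : Multiset A} (hK : Walk r a y K) (hR : Walk r y b R) :
    Walk r a b (K + R) := by
  induction hK with
  | refl => simpa using hR
  | cons hax _ ih => rw [cons_add]; exact cons hax (ih hR)

theorem mono (hrs : ∀ x y, r x y → s x y) {a b : A} {M : Multiset A} (h : Walk r a b M) :
    Walk s a b M := by
  induction h with
  | refl a => exact refl a
  | cons hax _ ih => exact cons (hrs _ _ hax) ih

theorem reflTransGen {a b : A} {M : Multiset A} (h : Walk r a b M) : ReflTransGen r a b := by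
  induction h with
  | refl => exact .refl
  | cons hax _ ih => exact ih.head hax

theorem reflTransGen_of_mem {a b z : A} {M : Multiset A} (h : Walk r a b M) (hz : z ∈ M) :
    ReflTransGen r a z ∧ ReflTransGen r z b := by
  induction h with
  | refl => simp at hz
  | cons hax hxb ih =>
    rcases mem_cons.mp hz with rfl | hz
    · exact ⟨.refl, hxb.reflTransGen.head hax⟩
    · exact (ih hz).imp_left (·.head hax)

theorem exists_of_reflTransGen {a b : A} (h : ReflTransGen r a b) : ∃ M, Walk r a b M := by
  induction h using ReflTransGen.head_induction_on with
  | refl => exact ⟨0, refl b⟩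
  | head hax _ ih => obtain ⟨M, hM⟩ := ih; exact ⟨_, cons hax hM⟩

end Walk

end Walk

section MultisetOrder

variable {α : Type*} {r : α → α → Prop}

theorem cutExpand_add_cons {K : Multiset α} {x : α} (hK : ∀ k ∈ K, r k x) (R : Multiset α) :
    CutExpand r (K + R) (x ::ₘ R) := by
  rw [← singleton_add]
  exact (cutExpand_add_right R).2 (cutExpand_singleton hK)

theorem cutExpand_cons_self (a : α) (R : Multiset α) : CutExpand r R (a ::ₘ R) := by
  simpa using (cutExpand_add_right R).2 (cutExpand_zero (r := r) (x := a))

theorem cutExpand_cons_cons {M' M : Multiset α} (a : α) (h : CutExpand r M' M) :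
    CutExpand r (a ::ₘ M') (a ::ₘ M) := by
  simpa only [singleton_add] using (cutExpand_add_left {a}).2 h

theorem transGen_cutExpand_add_cons_cons {K : Multiset α} {x : α} (hK : ∀ k ∈ K, r k x)
    (a : α) (R : Multiset α) : TransGen (CutExpand r) (K + R) (a ::ₘ x ::ₘ R) :=
  .head (cutExpand_cons_self a _) (.single (cutExpand_cons_cons a (cutExpand_add_cons hK R)))

end MultisetOrder

variable {A : Type*} {hd ar : A → A → Prop}

variable (hd ar) in
/-- `⇒ = → ∪ ⊢⊣`. -/
def Step (x y : A) : Prop := ar x y ∨ hd x y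

variable (hd ar) in
/-- A conversion step `⋈ = → ∪ ← ∪ ⊢⊣`. -/
def ConvStep (x y : A) : Prop := ar x y ∨ ar y x ∨ hd x y

variable (hd ar) in
/-- `→` modulo `⊢⊣*`, i.e. `⊢⊣* ∘ → ∘ ⊢⊣*`. -/
def ModRel : A → A → Prop := Comp (ReflTransGen hd) (Comp ar (ReflTransGen hd))

variable (hd ar) in
def ChurchRosserMod : Prop :=
  ∀ a b, ReflTransGen (ConvStep hd ar) a b →
    ∃ u v, ReflTransGen ar a u ∧ ReflTransGen hd u v ∧ ReflTransGen ar b v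

variable (hd ar) in
def PeakCondition : Prop :=
  ∀ a b c, ar b a → ar b c →
    ∃ u, ReflTransGen (Step hd ar) a u ∧ ReflTransGen (Step hd ar) c u

variable (hd ar) in
def CliffCondition : Prop :=
  ∀ a b c, hd a b → ar b c →
    ∃ w u, ar a w ∧ ReflTransGen (Step hd ar) w u ∧ ReflTransGen (Step hd ar) c u

variable (hd ar) in
/-- A conversion `a →* u ⊢⊣* v ←* b` with vertex multiset `M`. -/
def Valley (a b : A) (M : Multiset A) : Prop :=
  ∃ u v M₁ M₂ M₃, Walk ar a u M₁ ∧ Walk hd u v M₂ ∧ Walk (flip ar) v b M₃ ∧ M = M₁ + M₂ + M₃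

variable (hd ar) in
def Below : A → A → Prop := TransGen (flip (ModRel hd ar))

theorem wellFounded_flip_modRel
    (hwf : ¬ ∃ f : ℕ → A, ∀ n, Comp ar (ReflTransGen hd) (f n) (f (n + 1))) :
    WellFounded (flip (ModRel hd ar)) := by
  refine wellFounded_iff_isEmpty_descending_chain.2 ⟨fun ⟨f, hf⟩ => hwf ?_⟩
  choose p hp q hpq hq using hf
  exact ⟨p, fun n => ⟨q n, hpq n, (hq n).trans (hp (n + 1))⟩⟩

theorem reflTransGen_step_of_ar {x y : A} (h : ReflTransGen ar x y) :
    ReflTransGen (Step hd ar) x y :=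
  ReflTransGen.mono (fun _ _ => Or.inl) _ _ h

theorem reflTransGen_step_of_hd {x y : A} (h : ReflTransGen hd x y) :
    ReflTransGen (Step hd ar) x y :=
  ReflTransGen.mono (fun _ _ => Or.inr) _ _ h

theorem ModRel.trans_reflTransGen {x y z : A} (hxy : ModRel hd ar x y)
    (hyz : ReflTransGen hd y z) : ModRel hd ar x z :=
  let ⟨p, hxp, q, hpq, hqy⟩ := hxy
  ⟨p, hxp, q, hpq, hqy.trans hyz⟩

theorem transGen_modRel_of_reflTransGen_step {x y z : A} (hxy : TransGen (ModRel hd ar) x y)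
    (hyz : ReflTransGen (Step hd ar) y z) : TransGen (ModRel hd ar) x z := by
  induction hyz with
  | refl => exact hxy
  | tail _ hstep ih =>
    rcases hstep with har | hhd
    · exact ih.tail ⟨_, .refl, _, har, .refl⟩
    · obtain ⟨p, hxp, hp⟩ := TransGen.tail'_iff.mp ih
      exact .tail' hxp (hp.trans_reflTransGen (.single hhd))

theorem below_of_step {x p q k : A} (hxp : ReflTransGen hd x p) (hpq : ar p q)
    (hqk : ReflTransGen (Step hd ar) q k) : Below hd ar k x :=
  transGen_swap.mpr <| transGen_modRel_of_reflTransGen_step (.single ⟨p, hxp, q, hpq, .refl⟩) hqk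

theorem exists_conversion_of_join (hsym : ∀ a b, hd a b → hd b a) {a c t : A}
    (hat : ReflTransGen (Step hd ar) a t) (hct : ReflTransGen (Step hd ar) c t) :
    ∃ K, Walk (ConvStep hd ar) a c K ∧
      ∀ k ∈ K, ReflTransGen (Step hd ar) a k ∨ ReflTransGen (Step hd ar) c k := by
  obtain ⟨K₁, hK₁⟩ := Walk.exists_of_reflTransGen hat
  obtain ⟨K₂, hK₂⟩ := Walk.exists_of_reflTransGen (reflTransGen_swap.mpr hct)
  refine ⟨K₁ + K₂, ?_, fun k hk => ?_⟩
  · refine (hK₁.mono fun x y h => ?_).append (hK₂.mono fun x y h => ?_)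
    · rcases h with h | h
      exacts [Or.inl h, Or.inr (Or.inr h)]
    · rcases h with h | h
      exacts [Or.inr (Or.inl h), Or.inr (Or.inr (hsym _ _ h))]
  · rcases mem_add.mp hk with hk | hk
    · exact .inl (hK₁.reflTransGen_of_mem hk).1
    · exact .inr (reflTransGen_swap.mp (hK₂.reflTransGen_of_mem hk).2)

theorem Valley.toConversion {a b : A} {M : Multiset A} (h : Valley hd ar a b M) :
    Walk (ConvStep hd ar) a b M := by
  obtain ⟨u, v, M₁, M₂, M₃, h₁, h₂, h₃, rfl⟩ := h
  exact ((h₁.mono fun _ _ => Or.inl).append (h₂.mono fun _ _ h => Or.inr (Or.inr h))).append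
    (h₃.mono fun _ _ h => Or.inr (Or.inl h))

theorem Valley.join {a b : A} {M : Multiset A} (h : Valley hd ar a b M) :
    ∃ u v, ReflTransGen ar a u ∧ ReflTransGen hd u v ∧ ReflTransGen ar b v := by
  obtain ⟨u, v, M₁, M₂, M₃, h₁, h₂, h₃, -⟩ := h
  exact ⟨u, v, h₁.reflTransGen, h₂.reflTransGen, reflTransGen_swap.mp h₃.reflTransGen⟩

theorem exists_lt_of_peak (hsym : ∀ a b, hd a b → hd b a) (hpeak : PeakCondition hd ar)
    {a x y b : A} {R : Multiset A} (hxa : ar x a) (hxy : ar x y)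
    (hR : Walk (ConvStep hd ar) y b R) :
    ∃ M, TransGen (CutExpand (Below hd ar)) M (a ::ₘ x ::ₘ R) ∧ Walk (ConvStep hd ar) a b M := by
  obtain ⟨t, hat, hyt⟩ := hpeak a x y hxa hxy
  obtain ⟨K, hK, hKmem⟩ := exists_conversion_of_join hsym hat hyt
  refine ⟨K + R, transGen_cutExpand_add_cons_cons (fun k hk => ?_) a R, hK.append hR⟩
  rcases hKmem k hk with hak | hyk
  exacts [below_of_step .refl hxa hak, below_of_step .refl hxy hyk]

theorem exists_lt_of_cliff (hsym : ∀ a b, hd a b → hd b a) (hcliff : CliffCondition hd ar)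
    {a x y b : A} {R : Multiset A} (hax : hd a x) (hxy : ar x y)
    (hR : Walk (ConvStep hd ar) y b R) :
    ∃ M, TransGen (CutExpand (Below hd ar)) M (a ::ₘ x ::ₘ R) ∧ Walk (ConvStep hd ar) a b M := by
  obtain ⟨w, t, haw, hwt, hyt⟩ := hcliff a x y hax hxy
  obtain ⟨K, hK, hKmem⟩ := exists_conversion_of_join hsym hwt hyt
  have hKx : ∀ k ∈ K, Below hd ar k x := fun k hk => by
    rcases hKmem k hk with hwk | hyk
    exacts [below_of_step (.single (hsym a x hax)) haw hwk, below_of_step .refl hxy hyk]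
  exact ⟨a ::ₘ (K + R), .single (cutExpand_cons_cons a (cutExpand_add_cons hKx R)),
    .cons (Or.inl haw) (hK.append hR)⟩

theorem exists_lt_of_cliff_symm (hsym : ∀ a b, hd a b → hd b a) (hcliff : CliffCondition hd ar)
    {a x y b : A} {R : Multiset A} (hxa : ar x a) (hxy : hd x y)
    (hR : Walk (ConvStep hd ar) y b R) :
    ∃ M, TransGen (CutExpand (Below hd ar)) M (a ::ₘ x ::ₘ R) ∧ Walk (ConvStep hd ar) a b M := by
  obtain ⟨w, t, hyw, hwt, hat⟩ := hcliff y x a (hsym x y hxy) hxa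
  obtain ⟨K, hK, hKmem⟩ := exists_conversion_of_join hsym hat hwt
  have hwy : Walk (ConvStep hd ar) w y {w} := .cons (Or.inr (Or.inl hyw)) (.refl y)
  have hKx : ∀ k ∈ K + {w}, Below hd ar k x := fun k hk => by
    rcases mem_add.mp hk with hk | hk
    · rcases hKmem k hk with hak | hwk
      exacts [below_of_step .refl hxa hak, below_of_step (.single hxy) hyw hwk]
    · rw [mem_singleton.mp hk]
      exact below_of_step (.single hxy) hyw .refl
  exact ⟨K + {w} + R, transGen_cutExpand_add_cons_cons hKx a R, (hK.append hwy).append hR⟩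

theorem valley_or_exists_lt_of_step (hsym : ∀ a b, hd a b → hd b a)
    (hpeak : PeakCondition hd ar) (hcliff : CliffCondition hd ar) {a x b : A} {M : Multiset A}
    (hax : ConvStep hd ar a x) (hM : Valley hd ar x b M) :
    Valley hd ar a b (a ::ₘ M) ∨
      ∃ M', TransGen (CutExpand (Below hd ar)) M' (a ::ₘ M) ∧ Walk (ConvStep hd ar) a b M' := by
  obtain ⟨u, v, M₁, M₂, M₃, h₁, h₂, h₃, rfl⟩ := hM
  rcases hax with hax | hxa | hax
  · exact .inl ⟨u, v, a ::ₘ M₁, M₂, M₃, .cons hax h₁, h₂, h₃, by simp⟩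
  · cases h₁ with
    | cons hxy h₁ =>
      have hR : Valley hd ar _ b _ := ⟨_, _, _, _, _, h₁, h₂, h₃, rfl⟩
      simpa only [cons_add] using .inr (exists_lt_of_peak hsym hpeak hxa hxy hR.toConversion)
    | refl =>
      cases h₂ with
      | @cons _ _ _ N hxy h₂ =>
        have hR : Valley hd ar _ b (N + M₃) := ⟨_, _, 0, _, _, .refl _, h₂, h₃, by rw [zero_add]⟩
        simpa only [zero_add, cons_add] using
          .inr (exists_lt_of_cliff_symm hsym hcliff hxa hxy hR.toConversion)
      | refl => exact .inl ⟨a, a, 0, 0, a ::ₘ M₃, .refl a, .refl a, .cons hxa h₃, by simp⟩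
  · cases h₁ with
    | cons hxy h₁ =>
      have hR : Valley hd ar _ b _ := ⟨_, _, _, _, _, h₁, h₂, h₃, rfl⟩
      simpa only [cons_add] using .inr (exists_lt_of_cliff hsym hcliff hax hxy hR.toConversion)
    | refl => exact .inl ⟨a, v, 0, a ::ₘ M₂, M₃, .refl a, .cons hax h₂, h₃, by simp⟩

/-- Removes the rightmost peak or cliff, if there is one. -/
theorem valley_or_exists_lt (hsym : ∀ a b, hd a b → hd b a)
    (hpeak : PeakCondition hd ar) (hcliff : CliffCondition hd ar) {a b : A} {M : Multiset A}
    (h : Walk (ConvStep hd ar) a b M) :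
    Valley hd ar a b M ∨
      ∃ M', TransGen (CutExpand (Below hd ar)) M' M ∧ Walk (ConvStep hd ar) a b M' := by
  induction h with
  | refl a => exact .inl ⟨a, a, 0, 0, 0, .refl a, .refl a, .refl a, rfl⟩
  | @cons a x b M hax _ ih =>
    rcases ih with hM | ⟨M', hM'M, hM'⟩
    · exact valley_or_exists_lt_of_step hsym hpeak hcliff hax hM
    · exact .inr ⟨a ::ₘ M', TransGen.lift (a ::ₘ ·) (fun _ _ => cutExpand_cons_cons a) _ _ hM'M,
        .cons hax hM'⟩

theorem churchRosserMod_of_peakCondition_of_cliffCondition (hsym : ∀ a b, hd a b → hd b a)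
    (hwf : WellFounded (flip (ModRel hd ar))) (hpeak : PeakCondition hd ar)
    (hcliff : CliffCondition hd ar) : ChurchRosserMod hd ar := by
  intro a b hab
  obtain ⟨M, hM⟩ := Walk.exists_of_reflTransGen hab
  clear hab
  induction M using hwf.transGen.cutExpand.transGen.induction with
  | _ M ih =>
    rcases valley_or_exists_lt hsym hpeak hcliff hM with hM | ⟨M', hM'M, hM'⟩
    exacts [hM.join, ih M' hM'M hM']

theorem ChurchRosserMod.peakCondition (h : ChurchRosserMod hd ar) : PeakCondition hd ar := by
  intro a b c hba hbc
  obtain ⟨u, v, hau, huv, hcv⟩ := h a c (.head (Or.inr (Or.inl hba)) (.single (Or.inl hbc)))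
  exact ⟨v, (reflTransGen_step_of_ar hau).trans (reflTransGen_step_of_hd huv),
    reflTransGen_step_of_ar hcv⟩

theorem ChurchRosserMod.cliffCondition (hsym : ∀ a b, hd a b → hd b a)
    (hwf : WellFounded (flip (ModRel hd ar))) (h : ChurchRosserMod hd ar) :
    CliffCondition hd ar := by
  intro a b c hab hbc
  obtain ⟨u, v, hau, huv, hcv⟩ := h a c (.head (Or.inr (Or.inr hab)) (.single (Or.inl hbc)))
  rcases hau.cases_head with rfl | ⟨w, haw, hwu⟩
  · have hcb : ReflTransGen (Step hd ar) c b :=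
      (reflTransGen_step_of_ar hcv).trans
        (ReflTransGen.mono (fun _ _ h => Or.inr (hsym _ _ h)) _ _ (reflTransGen_swap.mpr huv))
        |>.tail (Or.inr hab)
    exact (hwf.transGen.irrefl.irrefl b (below_of_step .refl hbc hcb)).elim
  · exact ⟨w, v, haw, (reflTransGen_step_of_ar hwu).trans (reflTransGen_step_of_hd huv),
      reflTransGen_step_of_ar hcv⟩

end ChurchRosserModulo

open Relation ChurchRosserModulo in
/-- Corollary 2.6: necessary and sufficient conditions for CRM
when `→ ∘ ⊢⊣*` is well-founded; `⇒ = → ∪ ⊢⊣`. -/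
theorem crm_iff_criterion {A : Type*} (hd ar : A → A → Prop)
    (hsym : ∀ a b, hd a b → hd b a)
    (hwf : ¬ ∃ f : ℕ → A, ∀ n,
      Relation.Comp ar (Relation.ReflTransGen hd) (f n) (f (n + 1))) :
    (∀ a b, Relation.ReflTransGen (fun x y => ar x y ∨ ar y x ∨ hd x y) a b →
      ∃ u v, Relation.ReflTransGen ar a u ∧ Relation.ReflTransGen hd u v ∧
        Relation.ReflTransGen ar b v)
    ↔
    ((∀ a b c, ar b a → ar b c →
      ∃ u, Relation.ReflTransGen (fun x y => ar x y ∨ hd x y) a u ∧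
        Relation.ReflTransGen (fun x y => ar x y ∨ hd x y) c u) ∧
     (∀ a b c, hd a b → ar b c →
      ∃ w u, ar a w ∧
        Relation.ReflTransGen (fun x y => ar x y ∨ hd x y) w u ∧
        Relation.ReflTransGen (fun x y => ar x y ∨ hd x y) c u)) := by
  have hwf' := wellFounded_flip_modRel hwf
  show ChurchRosserMod hd ar ↔ PeakCondition hd ar ∧ CliffCondition hd ar
  exact ⟨fun h => ⟨h.peakCondition, h.cliffCondition hsym hwf'⟩, fun ⟨hpeak, hcliff⟩ =>
    churchRosserMod_of_peakCondition_of_cliffCondition hsym hwf' hpeak hcliff⟩
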